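/- arXiv:0807.1079 — 2 statements merged into one kernel-verified Lean document; each statement's English description precedes it below -/
import Mathlib

section
/- For all α, β ∈ A with 0 < α < β < r, there exist x, y ∈ F(r,Λ,A) with supp(x) = supp(y) = (α, β) and x ∘ y ≠ y ∘ x; consequently, the centralizer of the set {x, y} in the subgroup F_{(α,β)}(r,Λ,A) is trivial. -/
open Set

noncomputable section

/-- The multiplicative group of positive real numbers. -/
abbrev PosReal : Type := {x : ℝ // 0 < x}

namespace ThompsonStein

/-- The support of a permutation of `ℝ`: the set of non-fixed points. -/
def supp (f : Equiv.Perm ℝ) : Set ℝ := {t | f t ≠ t}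

/-- The fixed-point set of a permutation of `ℝ`. -/
def fixSet (f : Equiv.Perm ℝ) : Set ℝ := {t | f t = t}

/-- Membership in the Stein–Thompson group `F(r, Λ, A)`, where elements of the group of
piecewise affine homeomorphisms of `[0, r)` are encoded as the permutations of `ℝ` fixing
every point outside `[0, r)`.  The conditions say: `f` fixes the complement of `[0, r)`
(so it restricts to a bijection of `[0, r)`), it is strictly increasing and continuous on
`[0, r)`, and it is piecewise affine with respect to a finite subdivision
`0 = t 0 < t 1 < ⋯ < t n = r` whose points and their images lie in `A`, the slope of each
affine piece lying in `Λ`. -/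
def MemF (r : ℝ) (Λ : Subgroup PosReal) (A : AddSubgroup ℝ) (f : Equiv.Perm ℝ) : Prop :=
  (∀ t : ℝ, t ∉ Set.Ico 0 r → f t = t) ∧
  StrictMonoOn f (Set.Ico 0 r) ∧
  ContinuousOn f (Set.Ico 0 r) ∧
  ∃ n : ℕ, ∃ t : Fin (n + 1) → ℝ,
    StrictMono t ∧ t 0 = 0 ∧ t (Fin.last n) = r ∧
    (∀ i, t i ∈ A) ∧ (∀ i, f (t i) ∈ A) ∧
    ∀ i : Fin n, ∃ s : PosReal, s ∈ Λ ∧ ∃ c : ℝ,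
      ∀ u ∈ Set.Icc (t i.castSucc) (t i.succ), f u = (s : ℝ) * u + c

/-- Membership in `F_S(r, Λ, A)`: the elements of `F(r, Λ, A)` with support contained
in `S`. -/
def MemFOn (r : ℝ) (Λ : Subgroup PosReal) (A : AddSubgroup ℝ) (S : Set ℝ)
    (f : Equiv.Perm ℝ) : Prop :=
  MemF r Λ A f ∧ supp f ⊆ S

/-- `f` has right slope `s` at `γ`:  `f` is affine with slope `s` on some interval
`(γ, γ + ε)` to the right of `γ`. -/
def HasRightSlope (f : ℝ → ℝ) (γ s : ℝ) : Prop :=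
  ∃ ε > (0 : ℝ), ∃ c : ℝ, ∀ u ∈ Set.Ioo γ (γ + ε), f u = s * u + c

/-- `f` has left slope `s` at `γ`:  `f` is affine with slope `s` on some interval
`(γ - ε, γ)` to the left of `γ`. -/
def HasLeftSlope (f : ℝ → ℝ) (γ s : ℝ) : Prop :=
  ∃ ε > (0 : ℝ), ∃ c : ℝ, ∀ u ∈ Set.Ioo (γ - ε) γ, f u = s * u + c

end ThompsonStein

/-!
Pick `σ ∈ Λ` with `σ > 1` and a small `d ∈ A` (of the form `σ⁻ᵏ (β - α)`), and let `x`, `y` be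
the bumps on `(α, β)` with slopes `σ, 1, σ⁻¹` whose first breakpoints are `α + d` and
`α + σ⁻¹ d`. If `z ∈ F_{(α,β)}` commutes with `x` and `y`, it commutes with `w = y⁻¹ x`, whose
support is nonempty and lies to the right of `α + σ⁻¹ d`; being increasing, `z` fixes
`p = inf supp w ∈ (α, β)`. Commuting with `x`, it then fixes the orbit `x⁻ⁿ p`, which accumulates
at `α`; since `z` is affine just to the right of `α`, it is the identity there, and conjugating by
powers of `x` spreads this over `(α, β)`. Taking `z = y` shows that `x` and `y` do not commute.
-/

namespace ThompsonStein

open Filter Topology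

section Permutations

variable {f g : Equiv.Perm ℝ} {S : Set ℝ} {t : ℝ}

lemma apply_eq_self_of_supp_subset (h : supp f ⊆ S) (ht : t ∉ S) : f t = t :=
  not_not.1 fun hft => ht (h hft)

lemma supp_inv (f : Equiv.Perm ℝ) : supp f⁻¹ = supp f := by
  ext t
  show f⁻¹ t ≠ t ↔ f t ≠ t
  rw [Ne, Equiv.Perm.inv_eq_iff_eq, eq_comm]

lemma pow_apply_mem_of_supp_subset (h : supp f ⊆ S) (ht : t ∈ S) (n : ℕ) : (f ^ n) t ∈ S := by
  induction n with
  | zero => exact ht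
  | succ n ih =>
    rw [pow_succ', Equiv.Perm.mul_apply]
    by_contra hout
    rw [f.injective (apply_eq_self_of_supp_subset h hout)] at hout
    exact hout ih

lemma supp_inv_mul (f g : Equiv.Perm ℝ) : supp (g⁻¹ * f) = {t | f t ≠ g t} := by
  ext t
  show g⁻¹ (f t) ≠ t ↔ f t ≠ g t
  rw [Ne, Equiv.Perm.inv_eq_iff_eq]

lemma image_supp_of_commute (h : Commute f g) : f '' supp g = supp g := by
  ext t
  have hcomm : f⁻¹ (g t) = g (f⁻¹ t) := DFunLike.congr_fun h.inv_left.eq t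
  rw [Equiv.image_eq_preimage_symm]
  show g (f⁻¹ t) ≠ f⁻¹ t ↔ g t ≠ t
  rw [← hcomm, (f⁻¹).injective.ne_iff]

end Permutations

lemma apply_csInf_of_image_eq {α : Type*} [ConditionallyCompleteLinearOrder α] (f : α ≃ α)
    (hf : StrictMono f) {s : Set α} (hs : f '' s = s) (hne : s.Nonempty) (hbdd : BddBelow s) :
    f (sInf s) = sInf s := by
  simpa [hs] using (StrictMono.orderIsoOfSurjective f hf f.surjective).map_csInf' hne hbdd

lemma exists_castSucc_le_lt_succ {α : Type*} [LinearOrder α] {n : ℕ} (t : Fin (n + 1) → α)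
    {γ : α} (h0 : t 0 ≤ γ) (hlast : γ < t (Fin.last n)) :
    ∃ i : Fin n, t i.castSucc ≤ γ ∧ γ < t i.succ := by
  induction n with
  | zero => exact absurd (h0.trans_lt hlast) (lt_irrefl _)
  | succ n ih =>
    by_cases h : γ < t (Fin.last n).castSucc
    · obtain ⟨i, hi⟩ := ih (t ∘ Fin.castSucc) h0 h
      exact ⟨i.castSucc, hi.1, by rw [Fin.succ_castSucc]; exact hi.2⟩
    · exact ⟨Fin.last n, not_lt.1 h, by simpa using hlast⟩

lemma eqOn_id_of_affine_of_fixed {f : ℝ → ℝ} {S : Set ℝ} {s c a b : ℝ}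
    (hf : ∀ u ∈ S, f u = s * u + c) (ha : a ∈ S) (hb : b ∈ S) (hab : a ≠ b)
    (hfa : f a = a) (hfb : f b = b) : ∀ u ∈ S, f u = u := by
  have hfa' := hf a ha
  have hfb' := hf b hb
  rw [hfa] at hfa'
  rw [hfb] at hfb'
  have hs : s = 1 := mul_right_cancel₀ (sub_ne_zero.2 hab) (by linear_combination hfb' - hfa')
  have hc : c = 0 := by rw [hs] at hfa'; linarith
  intro u hu
  rw [hf u hu, hs, hc, one_mul, add_zero]

section Dynamics

variable {x z : Equiv.Perm ℝ} {α β : ℝ}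

lemma tendsto_inv_pow_apply_nhdsGT (hx : Continuous x) (hxs : supp x ⊆ Ioo α β)
    (hxlt : ∀ t ∈ Ioo α β, t < x t) {u : ℝ} (hu : u ∈ Ioo α β) :
    Tendsto (fun n : ℕ => (x⁻¹ ^ n) u) atTop (𝓝[>] α) := by
  set q : ℕ → ℝ := fun n => (x⁻¹ ^ n) u
  have hq_mem : ∀ n, q n ∈ Ioo α β :=
    pow_apply_mem_of_supp_subset ((supp_inv x).trans_subset hxs) hu
  have hq_succ : ∀ n, x (q (n + 1)) = q n := fun n => by
    simp only [q, pow_succ', Equiv.Perm.mul_apply, Equiv.Perm.coe_inv, Equiv.apply_symm_apply]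
  have hanti : Antitone q := antitone_nat_of_succ_le fun n => by
    simpa only [hq_succ] using (hxlt _ (hq_mem (n + 1))).le
  have hbdd : BddBelow (range q) := ⟨α, by rintro _ ⟨n, rfl⟩; exact (hq_mem n).1.le⟩
  have hlim := tendsto_atTop_ciInf hanti hbdd
  set M := ⨅ n, q n
  have hxM : x M = M := by
    refine tendsto_nhds_unique ((hx.tendsto M).comp ((tendsto_add_atTop_iff_nat 1).2 hlim)) ?_
    simpa only [Function.comp_def, hq_succ] using hlim
  have hMα : M = α := by
    refine (le_ciInf fun n => (hq_mem n).1.le).eq_of_not_lt' fun hαM => ?_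
    exact (hxlt M ⟨hαM, (ciInf_le hbdd 0).trans_lt (hq_mem 0).2⟩).ne' hxM
  rw [hMα] at hlim
  exact tendsto_nhdsWithin_iff.2 ⟨hlim, Eventually.of_forall fun n => (hq_mem n).1⟩

lemma eq_one_of_commute_of_isFixedPt (hx : Continuous x) (hxs : supp x ⊆ Ioo α β)
    (hxlt : ∀ t ∈ Ioo α β, t < x t) (hzs : supp z ⊆ Ioo α β) {s : ℝ}
    (hzα : HasRightSlope z α s) (hzx : Commute z x) {p : ℝ} (hp : p ∈ Ioo α β)
    (hzp : Function.IsFixedPt z p) : z = 1 := by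
  obtain ⟨ε, hε, c, hz_affine⟩ := hzα
  have hcomm : ∀ (n : ℕ) t, z ((x⁻¹ ^ n) t) = (x⁻¹ ^ n) (z t) := fun n =>
    DFunLike.congr_fun (hzx.inv_right.pow_right n).eq
  have hnear : ∀ u ∈ Ioo α β, ∀ᶠ n in atTop, (x⁻¹ ^ n) u ∈ Ioo α (α + ε) := fun u hu =>
    tendsto_inv_pow_apply_nhdsGT hx hxs hxlt hu (Ioo_mem_nhdsGT (by linarith))
  -- The `x⁻¹`-orbit of `p` is fixed by `z` and runs into the affine germ of `z` at `α`.
  have hfixed : ∀ n : ℕ, z ((x⁻¹ ^ n) p) = (x⁻¹ ^ n) p := fun n => by rw [hcomm, hzp.eq]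
  obtain ⟨N, hN⟩ := eventually_atTop.1 (hnear p hp)
  have hne : (x⁻¹ ^ (N + 1)) p ≠ (x⁻¹ ^ N) p := by
    have hmem := pow_apply_mem_of_supp_subset ((supp_inv x).trans_subset hxs) hp (N + 1)
    have := (hxlt _ hmem).ne
    rw [pow_succ', Equiv.Perm.mul_apply, Equiv.Perm.coe_inv, Equiv.apply_symm_apply] at this
    rwa [pow_succ', Equiv.Perm.mul_apply]
  have hid := eqOn_id_of_affine_of_fixed hz_affine (hN (N + 1) (by omega)) (hN N le_rfl) hne
    (hfixed _) (hfixed _)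
  ext u
  by_cases hu : u ∈ Ioo α β
  · obtain ⟨n, hn⟩ := (hnear u hu).exists
    exact (x⁻¹ ^ n).injective ((hcomm n u).symm.trans (hid _ hn))
  · exact apply_eq_self_of_supp_subset hzs hu

end Dynamics

section MemF

variable {r : ℝ} {Λ : Subgroup PosReal} {A : AddSubgroup ℝ} {f : Equiv.Perm ℝ}

lemma MemF.strictMono (hf : MemF r Λ A f) : StrictMono f := by
  obtain ⟨hout, hmono, -⟩ := hf
  have hmaps : ∀ t ∈ Ico 0 r, f t ∈ Ico 0 r := fun t ht => by
    by_contra h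
    rw [f.injective (hout _ h)] at h
    exact h ht
  intro a b hab
  by_cases ha : a ∈ Ico 0 r <;> by_cases hb : b ∈ Ico 0 r
  · exact hmono ha hb hab
  · rw [hout b hb]
    have := hmaps a ha
    simp only [mem_Ico, not_and_or, not_le, not_lt] at ha hb this
    rcases hb with hb | hb <;> linarith
  · rw [hout a ha]
    have := hmaps b hb
    simp only [mem_Ico, not_and_or, not_le, not_lt] at ha hb this
    rcases ha with ha | ha <;> linarith
  · rwa [hout a ha, hout b hb]

lemma MemF.exists_hasRightSlope (hf : MemF r Λ A f) {γ : ℝ} (hγ : γ ∈ Ico 0 r) :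
    ∃ s, HasRightSlope f γ s := by
  obtain ⟨-, -, -, n, t, -, ht0, htn, -, -, hpieces⟩ := hf
  obtain ⟨i, hti, hγi⟩ := exists_castSucc_le_lt_succ t (ht0 ▸ hγ.1) (htn ▸ hγ.2)
  obtain ⟨s, -, c, hc⟩ := hpieces i
  exact ⟨s, t i.succ - γ, sub_pos.2 hγi, c,
    fun u hu => hc u ⟨hti.trans hu.1.le, by linarith [hu.2]⟩⟩

lemma memF_one (hr : 0 < r) (hrA : r ∈ A) : MemF r Λ A 1 := by
  refine ⟨fun _ _ => rfl, strictMono_id.strictMonoOn _, continuous_id.continuousOn, 1, ![0, r],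
    ?_, rfl, rfl, ?_, ?_, fun i => ⟨1, one_mem Λ, 0, fun u _ => by simp⟩⟩
  · simpa [Fin.strictMono_iff_lt_succ] using hr
  all_goals intro i; fin_cases i <;> simp [hrA]

end MemF

lemma MemF.eq_one_of_commute_of_commute {r : ℝ} {Λ : Subgroup PosReal} {A : AddSubgroup ℝ}
    {x w z : Equiv.Perm ℝ} {α β a b : ℝ} (hx : Continuous x) (hxs : supp x ⊆ Ioo α β)
    (hxlt : ∀ t ∈ Ioo α β, t < x t) (hw : supp w ⊆ Ici a) (hαa : α < a) (hb : b ∈ supp w)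
    (hbβ : b < β) (hz : MemF r Λ A z) (hzs : supp z ⊆ Ioo α β) (hα : α ∈ Ico 0 r)
    (hzx : Commute z x) (hzw : Commute z w) : z = 1 := by
  obtain ⟨s, hs⟩ := hz.exists_hasRightSlope hα
  have hbdd : BddBelow (supp w) := ⟨a, hw⟩
  have hp : sInf (supp w) ∈ Ioo α β :=
    ⟨hαa.trans_le (le_csInf ⟨b, hb⟩ hw), (csInf_le hbdd hb).trans_lt hbβ⟩
  exact eq_one_of_commute_of_isFixedPt hx hxs hxlt hzs hs hzx hp
    (apply_csInf_of_image_eq z hz.strictMono (image_supp_of_commute hzw) ⟨b, hb⟩ hbdd)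

section Bump

-- Identity outside `(α, β)`, then slope `μ` on `[α, α + d]`, a translation by `(μ - 1) * d` on
-- `[α + d, β - μ * d]` and slope `μ⁻¹` on `[β - μ * d, β]`.
def bump (α β μ d u : ℝ) : ℝ :=
  max u (min (α + μ * (u - α)) (min (u + (μ - 1) * d) (β + μ⁻¹ * (u - β))))

variable {α β μ d u : ℝ}

lemma bump_of_le (hμ : 1 < μ) (hu : u ≤ α) : bump α β μ d u = u :=
  max_eq_left ((min_le_left _ _).trans (by nlinarith))

lemma bump_of_ge (hμ : 1 < μ) (hu : β ≤ u) : bump α β μ d u = u := by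
  have := inv_lt_one_of_one_lt₀ hμ
  exact max_eq_left ((min_le_right _ _).trans ((min_le_right _ _).trans (by nlinarith)))

lemma bump_of_notMem_Ioo (hμ : 1 < μ) (hu : u ∉ Ioo α β) : bump α β μ d u = u := by
  rcases not_and_or.1 hu with h | h
  · exact bump_of_le hμ (not_lt.1 h)
  · exact bump_of_ge hμ (not_lt.1 h)

lemma lt_bump (hμ : 1 < μ) (hd : 0 < d) (hu : u ∈ Ioo α β) : u < bump α β μ d u := by
  have := inv_lt_one_of_one_lt₀ hμ
  exact (lt_min (by nlinarith [hu.1]) (lt_min (by nlinarith) (by nlinarith [hu.2]))).trans_le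
    (le_max_right _ _)

lemma bump_of_mem_Icc_left (hμ : 1 < μ) (hdβ : (1 + μ) * d ≤ β - α)
    (hu : u ∈ Icc α (α + d)) : bump α β μ d u = α + μ * (u - α) := by
  have := inv_lt_one_of_one_lt₀ hμ
  have := mul_inv_cancel₀ (zero_lt_one.trans hμ).ne'
  obtain ⟨h1, h2⟩ := hu
  have hLM : α + μ * (u - α) ≤ u + (μ - 1) * d := by nlinarith
  have hMR : u + (μ - 1) * d ≤ β + μ⁻¹ * (u - β) := by nlinarith
  rw [bump, min_eq_left (le_min hLM (hLM.trans hMR)), max_eq_right (by nlinarith)]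

lemma bump_of_mem_Icc_mid (hμ : 1 < μ) (hd : 0 ≤ d) (hu : u ∈ Icc (α + d) (β - μ * d)) :
    bump α β μ d u = u + (μ - 1) * d := by
  have := inv_lt_one_of_one_lt₀ hμ
  have := mul_inv_cancel₀ (zero_lt_one.trans hμ).ne'
  obtain ⟨h1, h2⟩ := hu
  have hML : u + (μ - 1) * d ≤ α + μ * (u - α) := by nlinarith
  have hMR : u + (μ - 1) * d ≤ β + μ⁻¹ * (u - β) := by nlinarith
  rw [bump, min_eq_left hMR, min_eq_right hML, max_eq_right (by nlinarith)]

lemma bump_of_mem_Icc_right (hμ : 1 < μ) (hdβ : (1 + μ) * d ≤ β - α)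
    (hu : u ∈ Icc (β - μ * d) β) : bump α β μ d u = β + μ⁻¹ * (u - β) := by
  have := inv_lt_one_of_one_lt₀ hμ
  have := mul_inv_cancel₀ (zero_lt_one.trans hμ).ne'
  obtain ⟨h1, h2⟩ := hu
  have hRM : β + μ⁻¹ * (u - β) ≤ u + (μ - 1) * d := by nlinarith
  have hML : u + (μ - 1) * d ≤ α + μ * (u - α) := by nlinarith
  rw [bump, min_eq_right hRM, min_eq_right (hRM.trans hML), max_eq_right (by nlinarith)]

lemma bump_strictMono (hμ : 1 < μ) : StrictMono (bump α β μ d) := fun a b hab =>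
  have := inv_pos.2 (zero_lt_one.trans hμ)
  max_lt_max hab (min_lt_min (by nlinarith) (min_lt_min (by linarith) (by nlinarith)))

lemma bump_continuous : Continuous (bump α β μ d) := by
  unfold bump
  fun_prop

lemma bump_surjective : Function.Surjective (bump α β μ d) := by
  refine bump_continuous.surjective (tendsto_atTop_mono (fun _ => le_max_left _ _) tendsto_id) ?_
  have hle : ∀ u, bump α β μ d u ≤ u + |(μ - 1) * d| := fun u =>
    max_le (le_add_of_nonneg_right (abs_nonneg _))
      (((min_le_right _ _).trans (min_le_left _ _)).trans (by linarith [le_abs_self ((μ - 1) * d)]))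
  exact tendsto_atBot_mono hle (tendsto_atBot_add_const_right _ _ tendsto_id)

end Bump

def bumpPerm (α β μ d : ℝ) (hμ : 1 < μ) : Equiv.Perm ℝ :=
  Equiv.ofBijective (bump α β μ d) ⟨(bump_strictMono hμ).injective, bump_surjective⟩

section BumpPerm

variable {α β μ d : ℝ} {hμ : 1 < μ}

@[simp]
lemma coe_bumpPerm : ⇑(bumpPerm α β μ d hμ) = bump α β μ d := rfl

lemma supp_bumpPerm (hd : 0 < d) : supp (bumpPerm α β μ d hμ) = Ioo α β := by
  ext u
  exact ⟨fun h => by_contra fun hu => h (bump_of_notMem_Ioo hμ hu),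
    fun hu => (lt_bump hμ hd hu).ne'⟩

def bumpBreaks (α β μ d r : ℝ) : Fin 6 → ℝ := ![0, α, α + d, β - μ * d, β, r]

lemma bumpBreaks_strictMono {r : ℝ} (hμ : 1 < μ) (hd : 0 < d) (hdβ : (1 + μ) * d < β - α)
    (h0α : 0 < α) (hβr : β < r) : StrictMono (bumpBreaks α β μ d r) := by
  rw [Fin.strictMono_iff_lt_succ]
  intro i
  fin_cases i <;> simp [bumpBreaks] <;> nlinarith

lemma bump_bumpBreaks_mem {r : ℝ} {A : AddSubgroup ℝ} (hμ : 1 < μ) (hd : 0 < d)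
    (hdβ : (1 + μ) * d < β - α) (h0α : 0 < α) (hβr : β < r) (hαA : α ∈ A) (hβA : β ∈ A)
    (hrA : r ∈ A) (hdA : d ∈ A) (hμdA : μ * d ∈ A) (i : Fin 6) :
    bump α β μ d (bumpBreaks α β μ d r i) ∈ A := by
  fin_cases i
  · show bump α β μ d 0 ∈ A
    rw [bump_of_le hμ h0α.le]
    exact zero_mem A
  · show bump α β μ d α ∈ A
    rwa [bump_of_le hμ le_rfl]
  · show bump α β μ d (α + d) ∈ A
    rw [bump_of_mem_Icc_left hμ hdβ.le ⟨by linarith, le_rfl⟩, add_sub_cancel_left]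
    exact add_mem hαA hμdA
  · show bump α β μ d (β - μ * d) ∈ A
    rw [bump_of_mem_Icc_mid hμ hd.le ⟨by linarith, le_rfl⟩,
      show β - μ * d + (μ - 1) * d = β - d by ring]
    exact sub_mem hβA hdA
  · show bump α β μ d β ∈ A
    rwa [bump_of_ge hμ le_rfl]
  · show bump α β μ d r ∈ A
    rwa [bump_of_ge hμ hβr.le]

lemma bump_affine_on_bumpBreaks {r : ℝ} {Λ : Subgroup PosReal} {σ : PosReal} (hσΛ : σ ∈ Λ)
    (hσ : 1 < (σ : ℝ)) (hd : 0 < d) (hdβ : (1 + σ) * d < β - α) (i : Fin 5) :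
    ∃ s : PosReal, s ∈ Λ ∧ ∃ c : ℝ, ∀ u ∈ Icc (bumpBreaks α β σ d r i.castSucc)
      (bumpBreaks α β σ d r i.succ), bump α β σ d u = (s : ℝ) * u + c := by
  fin_cases i
  · exact ⟨1, one_mem Λ, 0, fun u (hu : u ∈ Icc 0 α) => by simp [bump_of_le hσ hu.2]⟩
  · exact ⟨σ, hσΛ, α - σ * α, fun u (hu : u ∈ Icc α (α + d)) => by
      rw [bump_of_mem_Icc_left hσ hdβ.le hu]
      ring⟩
  · exact ⟨1, one_mem Λ, (σ - 1) * d, fun u (hu : u ∈ Icc (α + d) (β - σ * d)) => by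
      simp [bump_of_mem_Icc_mid hσ hd.le hu]⟩
  · exact ⟨σ⁻¹, inv_mem hσΛ, β - σ⁻¹ * β, fun u (hu : u ∈ Icc (β - σ * d) β) => by
      rw [bump_of_mem_Icc_right hσ hdβ.le hu, Positive.coe_inv]
      ring⟩
  · exact ⟨1, one_mem Λ, 0, fun u (hu : u ∈ Icc β r) => by simp [bump_of_ge hσ hu.1]⟩

lemma memF_bumpPerm {r : ℝ} {Λ : Subgroup PosReal} {A : AddSubgroup ℝ}
    (hΛA : ∀ s : PosReal, s ∈ Λ → ∀ a : ℝ, a ∈ A → (s : ℝ) * a ∈ A) {σ : PosReal}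
    (hσΛ : σ ∈ Λ) (hσ : 1 < (σ : ℝ)) (hd : 0 < d) (hdβ : (1 + σ) * d < β - α) (h0α : 0 < α)
    (hβr : β < r) (hαA : α ∈ A) (hβA : β ∈ A) (hrA : r ∈ A) (hdA : d ∈ A) :
    MemF r Λ A (bumpPerm α β σ d hσ) := by
  have hσdA := hΛA σ hσΛ d hdA
  refine ⟨fun t ht => bump_of_notMem_Ioo hσ fun h => ht ⟨h0α.le.trans h.1.le, h.2.trans hβr⟩,
    (bump_strictMono hσ).strictMonoOn _, bump_continuous.continuousOn, 5, bumpBreaks α β σ d r,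
    bumpBreaks_strictMono hσ hd hdβ h0α hβr, rfl, rfl, fun i => ?_,
    bump_bumpBreaks_mem hσ hd hdβ h0α hβr hαA hβA hrA hdA hσdA,
    bump_affine_on_bumpBreaks hσΛ hσ hd hdβ⟩
  fin_cases i
  exacts [zero_mem A, hαA, add_mem hαA hdA, sub_mem hβA hσdA, hβA, hrA]

end BumpPerm

lemma MemFOn.eq_one_of_commute_bumpPerm {r : ℝ} {Λ : Subgroup PosReal} {A : AddSubgroup ℝ}
    {α β μ d : ℝ} (hμ : 1 < μ) (hd : 0 < d) (hdβ : (1 + μ) * d < β - α) (hα : α ∈ Ico 0 r)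
    {z : Equiv.Perm ℝ} (hz : MemFOn r Λ A (Ioo α β) z)
    (hzx : Commute z (bumpPerm α β μ d hμ)) (hzy : Commute z (bumpPerm α β μ (μ⁻¹ * d) hμ)) :
    z = 1 := by
  have hμ₀ : 0 < μ := zero_lt_one.trans hμ
  have hd' : 0 < μ⁻¹ * d := by positivity
  have hdd' : μ⁻¹ * d < d := mul_lt_of_lt_one_left hd (inv_lt_one_of_one_lt₀ hμ)
  have hdβ' : (1 + μ) * (μ⁻¹ * d) ≤ β - α := by nlinarith
  have hagree : ∀ t ≤ α + μ⁻¹ * d, bump α β μ d t = bump α β μ (μ⁻¹ * d) t := fun t ht => by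
    rcases le_or_gt t α with htα | htα
    · rw [bump_of_le hμ htα, bump_of_le hμ htα]
    · rw [bump_of_mem_Icc_left hμ hdβ.le ⟨htα.le, by linarith⟩,
        bump_of_mem_Icc_left hμ hdβ' ⟨htα.le, ht⟩]
  have hdiffer : bump α β μ d (α + d) ≠ bump α β μ (μ⁻¹ * d) (α + d) := by
    rw [bump_of_mem_Icc_left hμ hdβ.le ⟨by linarith, le_rfl⟩,
      bump_of_mem_Icc_mid hμ hd'.le ⟨by linarith, by rw [mul_inv_cancel_left₀ hμ₀.ne']; nlinarith⟩]
    have hgap : α + μ * (α + d - α) - (α + d + (μ - 1) * (μ⁻¹ * d)) = μ⁻¹ * d * (μ - 1) ^ 2 := by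
      field_simp
      ring
    exact sub_ne_zero.1 (hgap ▸ (mul_pos hd' (pow_pos (sub_pos.2 hμ) 2)).ne')
  refine hz.1.eq_one_of_commute_of_commute bump_continuous (supp_bumpPerm hd).le
    (fun t => lt_bump hμ hd) (a := α + μ⁻¹ * d) (b := α + d) ?_ (by linarith) ?_ (by nlinarith)
    hz.2 hα hzx (hzy.inv_right.mul_right hzx)
  · rw [supp_inv_mul]
    exact fun t ht => not_lt.1 fun htlt => ht (hagree t htlt.le)
  · rw [supp_inv_mul]
    exact hdiffer

lemma exists_mem_one_lt_of_ne_bot {Λ : Subgroup PosReal} (hΛ : Λ ≠ ⊥) : ∃ σ ∈ Λ, 1 < (σ : ℝ) := by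
  have : Nontrivial Λ := (Subgroup.nontrivial_iff_ne_bot Λ).2 hΛ
  obtain ⟨σ, hσ⟩ := exists_one_lt' (α := Λ)
  exact ⟨σ, σ.2, hσ⟩

lemma exists_mem_pos_lt {Λ : Subgroup PosReal} {A : AddSubgroup ℝ}
    (hΛA : ∀ s : PosReal, s ∈ Λ → ∀ a : ℝ, a ∈ A → (s : ℝ) * a ∈ A) {σ : PosReal}
    (hσΛ : σ ∈ Λ) (hσ : 1 < (σ : ℝ)) {a : ℝ} (ha : a ∈ A) (ha₀ : 0 < a) {ε : ℝ} (hε : 0 < ε) :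
    ∃ d ∈ A, 0 < d ∧ d < ε := by
  obtain ⟨k, hk⟩ := pow_unbounded_of_one_lt (a / ε) hσ
  refine ⟨((σ ^ k)⁻¹ : PosReal) * a, hΛA _ (inv_mem (pow_mem hσΛ k)) a ha,
    mul_pos (σ ^ k)⁻¹.2 ha₀, ?_⟩
  rw [Positive.coe_inv, Positive.val_pow, inv_mul_lt_iff₀ (by positivity)]
  exact (div_lt_iff₀ hε).1 hk

/-- For all `α, β ∈ A` with `0 < α < β < r`, there exist
`x, y ∈ F(r, Λ, A)` with `supp x = supp y = (α, β)` and `x ∘ y ≠ y ∘ x`; consequently the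
centralizer of `{x, y}` in the subgroup `F_{(α,β)}(r, Λ, A)` is trivial. -/
theorem exists_noncommuting_pair_with_trivial_centralizer
    (r : ℝ) (hr : 0 < r) (Λ : Subgroup PosReal) (hΛ : Λ ≠ ⊥)
    (A : AddSubgroup ℝ) (hrA : r ∈ A)
    (hΛA : ∀ s : PosReal, s ∈ Λ → ∀ a : ℝ, a ∈ A → (s : ℝ) * a ∈ A)
    (α β : ℝ) (hαA : α ∈ A) (hβA : β ∈ A)
    (h0α : 0 < α) (hαβ : α < β) (hβr : β < r) :
    ∃ x y : Equiv.Perm ℝ, MemF r Λ A x ∧ MemF r Λ A y ∧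
      supp x = Set.Ioo α β ∧ supp y = Set.Ioo α β ∧
      x * y ≠ y * x ∧
      {z : Equiv.Perm ℝ | MemFOn r Λ A (Set.Ioo α β) z ∧ Commute z x ∧ Commute z y}
        = {1} := by
  obtain ⟨σ, hσΛ, hσ⟩ := exists_mem_one_lt_of_ne_bot hΛ
  obtain ⟨d, hdA, hd, hdβ⟩ := exists_mem_pos_lt hΛA hσΛ hσ (sub_mem hβA hαA) (sub_pos.2 hαβ)
    (ε := (β - α) / (1 + σ)) (by positivity)
  rw [lt_div_iff₀ (by positivity), mul_comm] at hdβ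
  have hd' : 0 < (σ : ℝ)⁻¹ * d := by positivity
  have hdβ' : (1 + σ) * ((σ : ℝ)⁻¹ * d) < β - α := by
    nlinarith [mul_lt_of_lt_one_left hd (inv_lt_one_of_one_lt₀ hσ)]
  have hxF := memF_bumpPerm hΛA hσΛ hσ hd hdβ h0α hβr hαA hβA hrA hdA
  have hyF := memF_bumpPerm hΛA hσΛ hσ hd' hdβ' h0α hβr hαA hβA hrA (hΛA _ (inv_mem hσΛ) d hdA)
  have hcentral : ∀ z, MemFOn r Λ A (Ioo α β) z → Commute z (bumpPerm α β σ d hσ) →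
      Commute z (bumpPerm α β σ ((σ : ℝ)⁻¹ * d) hσ) → z = 1 := fun z hz =>
    hz.eq_one_of_commute_bumpPerm hσ hd hdβ ⟨h0α.le, hαβ.trans hβr⟩
  refine ⟨_, _, hxF, hyF, supp_bumpPerm hd, supp_bumpPerm hd', fun hxy => ?_, ?_⟩
  · obtain ⟨t, ht⟩ := nonempty_Ioo.2 hαβ
    have hy1 := hcentral _ ⟨hyF, (supp_bumpPerm hd').le⟩ hxy.symm (Commute.refl _)
    exact (lt_bump hσ hd' ht).ne' (DFunLike.congr_fun hy1 t)
  · ext z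
    refine ⟨fun ⟨hz, hzx, hzy⟩ => hcentral z hz hzx hzy, ?_⟩
    rintro rfl
    exact ⟨⟨memF_one hr hrA, fun t ht => (ht rfl).elim⟩, Commute.one_left _, Commute.one_left _⟩

end ThompsonStein
end
end

section
/- Let L be a first-order language with encodable sets of symbols, and fix the induced encoding of L-sentences into ℕ. Let T be an L-theory, and suppose there is a sentence θ ∈ T such that the theory Cn(θ) = {φ : every model of θ satisfies φ} is essentially undecidable. Then T is hereditarily undecidable: every L-theory T′ with T′ ⊆ T is undecidable. -/
/-!
If a subtheory `T'` of `T` were decidable, so would be `T'' = {φ | θ → φ ∈ T'}`: on codes,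
`φ ↦ θ → φ` prepends a fixed block of symbols, which is computable, and it is a many-one
reduction because the encoding of formulas is prefix-free. By the deduction theorem `T''` is the
set of consequences of `T' ∪ {θ}`; this set is satisfiable (it lies inside `T`), deductively
closed and contains `Cn θ`, contradicting the essential undecidability of `Cn θ`.
-/

open FirstOrder

namespace EssentialUndecidability

variable {L : FirstOrder.Language}

section

variable [∀ n, Encodable (L.Functions n)] [∀ n, Encodable (L.Relations n)]

/-- The encoding of `L`-sentences into `ℕ` induced by the encodings of the symbols of `L`:
a sentence is encoded as the code of the list of symbols `listEncode φ`. -/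
noncomputable def sentenceCode (φ : L.Sentence) : ℕ :=
  Encodable.encode (FirstOrder.Language.BoundedFormula.listEncode φ)

/-- A set of `L`-sentences is decidable if the set of natural-number codes of its elements
is a computable subset of `ℕ`. -/
noncomputable def DecidableSentenceSet (S : Set L.Sentence) : Prop :=
  ComputablePred (fun n : ℕ => n ∈ sentenceCode '' S)

end

/-- `T` is an `L`-theory in the sense of the paper: a satisfiable, deductively closed set
of `L`-sentences. -/
def IsClosedTheory (T : L.Theory) : Prop :=
  T.IsSatisfiable ∧ ∀ φ : L.Sentence, T.ModelsBoundedFormula φ → φ ∈ T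

/-- The set of consequences of a single sentence `θ`: the sentences true in every model
of `θ`. -/
def Cn (θ : L.Sentence) : L.Theory :=
  {φ : L.Sentence | ({θ} : L.Theory).ModelsBoundedFormula φ}

section

variable [∀ n, Encodable (L.Functions n)] [∀ n, Encodable (L.Relations n)]

/-- A theory `T₀` is essentially undecidable if every `L`-theory containing it is
undecidable. -/
noncomputable def EssentiallyUndecidable (T₀ : L.Theory) : Prop :=
  ∀ T' : L.Theory, IsClosedTheory T' → T₀ ⊆ T' → ¬ DecidableSentenceSet T'

end

open FirstOrder.Language

section ListCode

variable {β : Type*} [Encodable β]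

def prependCode (P : List β) (n : ℕ) : ℕ :=
  P.foldr (fun a m => Nat.pair (Encodable.encode a) m + 1) n

theorem prependCode_cons (a : β) (P : List β) (n : ℕ) :
    prependCode (a :: P) n = Nat.pair (Encodable.encode a) (prependCode P n) + 1 :=
  rfl

theorem primrec_prependCode (P : List β) : Primrec (prependCode P) := by
  induction P with
  | nil => exact Primrec.id
  | cons a P ih => exact Primrec.succ.comp (Primrec₂.natPair.comp (Primrec.const _) ih)

theorem encode_append_eq_prependCode (P l : List β) :
    Encodable.encode (P ++ l) = prependCode P (Encodable.encode l) := by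
  induction P with
  | nil => rfl
  | cons a P ih => rw [List.cons_append, Encodable.encode_list_cons, ih, prependCode_cons]

theorem exists_eq_append_of_encode_eq_prependCode {P l : List β} {n : ℕ}
    (h : Encodable.encode l = prependCode P n) :
    ∃ l', l = P ++ l' ∧ Encodable.encode l' = n := by
  induction P generalizing l with
  | nil => exact ⟨l, rfl, h⟩
  | cons a P ih =>
    cases l with
    | nil => simp [prependCode] at h
    | cons b l =>
      rw [Encodable.encode_list_cons, prependCode_cons, Nat.succ_eq_add_one,
        Nat.add_right_cancel_iff, Nat.pair_eq_pair] at h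
      obtain ⟨l', rfl, hl'⟩ := ih h.2
      exact ⟨l', by rw [Encodable.encode_injective h.1, List.cons_append], hl'⟩

end ListCode

theorem listEncode_append_inj {α : Type*} {n : ℕ} {φ ψ : L.BoundedFormula α n}
    {l₁ l₂ : List ((Σ k, L.Term (α ⊕ Fin k)) ⊕ ((Σ n, L.Relations n) ⊕ ℕ))}
    (h : φ.listEncode ++ l₁ = ψ.listEncode ++ l₂) : φ = ψ ∧ l₁ = l₂ := by
  induction φ generalizing l₁ l₂ with
  | falsum => cases ψ <;> simp_all [BoundedFormula.listEncode]
  | equal => cases ψ <;> simp_all [BoundedFormula.listEncode]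
  | rel R ts =>
    cases ψ with
    | rel R' ts' =>
      simp only [BoundedFormula.listEncode, List.cons_append, List.cons.injEq, Sum.inr.injEq,
        Sum.inl.injEq, Sigma.mk.inj_iff] at h
      obtain ⟨⟨rfl, hR⟩, -, h⟩ := h
      cases hR
      obtain ⟨hts, rfl⟩ := List.append_inj h (by simp)
      have hts' : ∀ i, ts i = ts' i := by simpa using hts
      exact ⟨congrArg _ (funext hts'), rfl⟩
    | _ => simp [BoundedFormula.listEncode] at h
  | imp φ₁ φ₂ ih₁ ih₂ =>
    cases ψ with
    | imp ψ₁ ψ₂ =>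
      simp only [BoundedFormula.listEncode, List.cons_append, List.append_assoc, List.cons.injEq,
        true_and] at h
      obtain ⟨rfl, h⟩ := ih₁ h
      obtain ⟨rfl, rfl⟩ := ih₂ (List.append_cancel_left h)
      exact ⟨rfl, rfl⟩
    | _ => simp [BoundedFormula.listEncode] at h
  | all φ ih =>
    cases ψ with
    | all ψ =>
      simp only [BoundedFormula.listEncode, List.cons_append, List.cons.injEq, true_and] at h
      obtain ⟨rfl, rfl⟩ := ih h
      exact ⟨rfl, rfl⟩
    | _ => simp [BoundedFormula.listEncode] at h

theorem exists_eq_imp_of_listEncode_eq {α : Type*} {n : ℕ} {θ ψ : L.BoundedFormula α n}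
    {l : List ((Σ k, L.Term (α ⊕ Fin k)) ⊕ ((Σ n, L.Relations n) ⊕ ℕ))}
    (h : ψ.listEncode = (Sum.inr (Sum.inr 0) :: θ.listEncode) ++ l) :
    ∃ φ, ψ = θ.imp φ ∧ l = φ.listEncode := by
  cases ψ with
  | imp ψ₁ ψ₂ =>
    simp only [BoundedFormula.listEncode, List.cons_append, List.cons.injEq, true_and] at h
    obtain ⟨rfl, rfl⟩ := listEncode_append_inj h
    exact ⟨ψ₂, rfl, rfl⟩
  | _ => simp [BoundedFormula.listEncode] at h

theorem models_imp_iff {T : L.Theory} {θ φ : L.Sentence} :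
    T ⊨ᵇ θ.imp φ ↔ insert θ T ⊨ᵇ φ := by
  simp only [Theory.models_sentence_iff]
  constructor
  · intro h M
    obtain ⟨hθ, hT⟩ := Theory.model_insert_iff.1 M.is_model
    exact (Sentence.realize_imp _).1 (h (Theory.ModelType.of T M)) hθ
  · intro h M
    refine (Sentence.realize_imp _).2 fun hθ => ?_
    have : M ⊨ insert θ T := Theory.model_insert_iff.2 ⟨hθ, M.is_model⟩
    exact h (Theory.ModelType.of _ M)

theorem setOf_imp_mem_eq_setOf_models {T : L.Theory}
    (hT : ∀ φ : L.Sentence, T ⊨ᵇ φ → φ ∈ T) (θ : L.Sentence) :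
    {φ | θ.imp φ ∈ T} = {φ | insert θ T ⊨ᵇ φ} := by
  ext φ
  exact ⟨fun h => models_imp_iff.1 (Theory.models_sentence_of_mem h),
    fun h => hT _ (models_imp_iff.2 h)⟩

theorem isClosedTheory_setOf_models {S : L.Theory} (hS : S.IsSatisfiable) :
    IsClosedTheory {φ | S ⊨ᵇ φ} := by
  refine ⟨?_, fun φ hφ => Theory.models_of_models_theory (fun ψ hψ => hψ) hφ⟩
  obtain ⟨M⟩ := hS
  have : M ⊨ {φ | S ⊨ᵇ φ} := Theory.model_iff _ |>.2 fun φ hφ => hφ.realize_sentence M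
  exact ⟨Theory.ModelType.of _ M⟩

theorem Cn_subset_setOf_models {S : L.Theory} {θ : L.Sentence} (hθ : θ ∈ S) :
    Cn θ ⊆ {φ | S ⊨ᵇ φ} := fun _ hφ =>
  Theory.models_of_models_theory
    (fun _ hψ => Set.mem_singleton_iff.1 hψ ▸ Theory.models_sentence_of_mem hθ) hφ

section

variable [∀ n, Encodable (L.Functions n)] [∀ n, Encodable (L.Relations n)]

theorem DecidableSentenceSet.setOf_imp_mem {S : L.Theory} (hS : DecidableSentenceSet S)
    (θ : L.Sentence) : DecidableSentenceSet {φ | θ.imp φ ∈ S} := by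
  set P := Sum.inr (Sum.inr 0) :: θ.listEncode
  refine ComputablePred.computable_of_manyOneReducible
    ⟨prependCode P, (primrec_prependCode P).to_comp, ?_⟩ hS
  intro n
  constructor
  · rintro ⟨φ, hφ, rfl⟩
    exact ⟨θ.imp φ, hφ, encode_append_eq_prependCode P φ.listEncode⟩
  · rintro ⟨ψ, hψ, hcode⟩
    obtain ⟨l, hl, rfl⟩ := exists_eq_append_of_encode_eq_prependCode hcode
    obtain ⟨φ, rfl, rfl⟩ := exists_eq_imp_of_listEncode_eq hl
    exact ⟨φ, hψ, rfl⟩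

/-- Let `L` be a first-order language with encodable sets of symbols, and
fix the induced encoding of `L`-sentences into `ℕ`.  Let `T` be an `L`-theory, and suppose
there is a sentence `θ ∈ T` such that the theory `Cn θ` of consequences of `θ` is
essentially undecidable.  Then `T` is hereditarily undecidable: every `L`-theory `T'` with
`T' ⊆ T` is undecidable. -/
theorem hereditarily_undecidable_of_finitely_axiomatized_essentially_undecidable_subtheory
    (T : L.Theory) (hT : IsClosedTheory T)
    (θ : L.Sentence) (hθ : θ ∈ T) (hess : EssentiallyUndecidable (Cn θ)) :
    ∀ T' : L.Theory, IsClosedTheory T' → T' ⊆ T → ¬ DecidableSentenceSet T' := by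
  intro T' hT' hsub hdec
  have hsat : (insert θ T').IsSatisfiable := hT.1.mono (Set.insert_subset hθ hsub)
  have hdec' := hdec.setOf_imp_mem θ
  rw [setOf_imp_mem_eq_setOf_models hT'.2 θ] at hdec'
  exact hess _ (isClosedTheory_setOf_models hsat)
    (Cn_subset_setOf_models (Set.mem_insert θ T')) hdec'

end

end EssentialUndecidability
end
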